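/- arXiv:2010.05582 — 7 statements merged into one kernel-verified Lean document; each statement's English description precedes it below -/
import Mathlib

section
/- For a poset-causal system Σ_P ∼ (A,B,C,D), the reachable subspace of the global pair (A,B) equals the sum over i ∈ P of the embeddings into the global state space of the i-downstream reachable subspaces: R(A,B) = Σ_{i∈P} I_n(:,↓i) R_i, where R_i = R(A(↓i,↓i), B(↓i,i)). -/
open Matrix

attribute [local instance] Classical.propDecidable

/-- Block index type for a partition `n` over the index set `P`. -/
abbrev BIdx {P : Type*} (n : P → ℕ) : Type _ := (i : P) × Fin (n i)

variable {P : Type*} [Fintype P] [DecidableEq P]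

/-- The embedding matrix `I_n(:,S)` of `ℝ^{n_S}` into `ℝ^{n}`. -/
noncomputable def embMat (n : P → ℕ) (S : Set P) :
    Matrix (BIdx n) {a : BIdx n // a.1 ∈ S} ℝ :=
  Matrix.of fun p q => if p = (q : BIdx n) then 1 else 0

/-- The matrix of the orthogonal projection onto the coordinate subspace of block indices in `S`. -/
noncomputable def projMat (n : P → ℕ) (S : Set P) : Matrix (BIdx n) (BIdx n) ℝ :=
  Matrix.of fun p q => if p = q ∧ p.1 ∈ S then 1 else 0

/-- Downstream set `↓S = {i | ∃ j ∈ S, j ⪰ i}` (where `j ⪰ i` is encoded as `le i j`). -/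
def downSet (le : P → P → Prop) (S : Set P) : Set P := {i | ∃ j ∈ S, le i j}

/-- Upstream set `↑S = {i | ∃ j ∈ S, i ⪰ j}`. -/
def upSet (le : P → P → Prop) (S : Set P) : Set P := {i | ∃ j ∈ S, le j i}

/-- Membership of a block matrix in the block incidence space: `G_{ab} = 0` whenever `b ⋡ a`. -/
def Inc (le : P → P → Prop) {n m : P → ℕ} (G : Matrix (BIdx n) (BIdx m) ℝ) : Prop :=
  ∀ a b, ¬ le a.1 b.1 → G a b = 0

/-- Block compression `G(Q,S)` of a block matrix to block rows in `Q` and block columns in `S`. -/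
def bcmp {n m : P → ℕ} (G : Matrix (BIdx n) (BIdx m) ℝ) (Q S : Set P) :
    Matrix {a : BIdx n // a.1 ∈ Q} {a : BIdx m // a.1 ∈ S} ℝ :=
  G.submatrix Subtype.val Subtype.val

/-- The reachable subspace `R(A,B) = im [B, AB, ..., A^{n-1}B]`. -/
noncomputable def reach {ι κ : Type*} [Fintype ι] [Fintype κ] [DecidableEq ι]
    (A : Matrix ι ι ℝ) (B : Matrix ι κ ℝ) : Submodule ℝ (ι → ℝ) :=
  ⨆ k : Fin (Fintype.card ι), LinearMap.range ((A ^ (k : ℕ) * B).mulVecLin)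

/-- The unobservable subspace `N(C,A) = ker [C; CA; ...; CA^{n-1}]`. -/
noncomputable def unobs {ι κ : Type*} [Fintype ι] [Fintype κ] [DecidableEq ι]
    (C : Matrix κ ι ℝ) (A : Matrix ι ι ℝ) : Submodule ℝ (ι → ℝ) :=
  ⨅ k : Fin (Fintype.card ι), LinearMap.ker ((C * A ^ (k : ℕ)).mulVecLin)

/-- The reachable subspace, inside Euclidean space. -/
noncomputable def reachE {ι κ : Type*} [Fintype ι] [Fintype κ] [DecidableEq ι] [DecidableEq κ]
    (A : Matrix ι ι ℝ) (B : Matrix ι κ ℝ) : Submodule ℝ (EuclideanSpace ℝ ι) :=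
  ⨆ k : Fin (Fintype.card ι), LinearMap.range (Matrix.toEuclideanLin (A ^ (k : ℕ) * B))

/-- The unobservable subspace, inside Euclidean space. -/
noncomputable def unobsE {ι κ : Type*} [Fintype ι] [Fintype κ] [DecidableEq ι] [DecidableEq κ]
    (C : Matrix κ ι ℝ) (A : Matrix ι ι ℝ) : Submodule ℝ (EuclideanSpace ℝ ι) :=
  ⨅ k : Fin (Fintype.card ι), LinearMap.ker (Matrix.toEuclideanLin (C * A ^ (k : ℕ)))

/-- The coordinate subspace `X_S = ⊕_{j ∈ S} X_j` of the global state space. -/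
noncomputable def coordSub (n : P → ℕ) (S : Set P) : Submodule ℝ (BIdx n → ℝ) :=
  LinearMap.range (projMat n S).mulVecLin

/-- The coordinate subspace `X_S`, inside Euclidean space. -/
noncomputable def coordE (n : P → ℕ) (S : Set P) : Submodule ℝ (EuclideanSpace ℝ (BIdx n)) :=
  LinearMap.range (Matrix.toEuclideanLin (projMat n S))

/-- The `i`-downstream reachable set `R_i = R(A(↓i,↓i), B(↓i,i))`, embedded into the
global state space via `I_n(:,↓i)`. -/
noncomputable def Ri (le : P → P → Prop) {n m : P → ℕ}
    (A : Matrix (BIdx n) (BIdx n) ℝ) (B : Matrix (BIdx n) (BIdx m) ℝ) (i : P) :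
    Submodule ℝ (BIdx n → ℝ) :=
  Submodule.map (embMat n (downSet le {i})).mulVecLin
    (reach (bcmp A (downSet le {i}) (downSet le {i})) (bcmp B (downSet le {i}) {i}))

/-- The `i`-downstream reachable set, inside Euclidean space. -/
noncomputable def RiE (le : P → P → Prop) {n m : P → ℕ}
    (A : Matrix (BIdx n) (BIdx n) ℝ) (B : Matrix (BIdx n) (BIdx m) ℝ) (i : P) :
    Submodule ℝ (EuclideanSpace ℝ (BIdx n)) :=
  Submodule.map (Matrix.toEuclideanLin (embMat n (downSet le {i})))
    (reachE (bcmp A (downSet le {i}) (downSet le {i})) (bcmp B (downSet le {i}) {i}))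

/-- The `i`-upstream indistinguishable set `N_i = N(C(i,↑i), A(↑i,↑i))`, embedded into the
global state space via `I_n(:,↑i)`. -/
noncomputable def Ni (le : P → P → Prop) {n r : P → ℕ}
    (C : Matrix (BIdx r) (BIdx n) ℝ) (A : Matrix (BIdx n) (BIdx n) ℝ) (i : P) :
    Submodule ℝ (BIdx n → ℝ) :=
  Submodule.map (embMat n (upSet le {i})).mulVecLin
    (unobs (bcmp C {i} (upSet le {i})) (bcmp A (upSet le {i}) (upSet le {i})))

/-- The `i`-upstream indistinguishable set, inside Euclidean space. -/
noncomputable def NiE (le : P → P → Prop) {n r : P → ℕ}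
    (C : Matrix (BIdx r) (BIdx n) ℝ) (A : Matrix (BIdx n) (BIdx n) ℝ) (i : P) :
    Submodule ℝ (EuclideanSpace ℝ (BIdx n)) :=
  Submodule.map (Matrix.toEuclideanLin (embMat n (upSet le {i})))
    (unobsE (bcmp C {i} (upSet le {i})) (bcmp A (upSet le {i}) (upSet le {i})))

/-!
By Cayley–Hamilton, `R(A,B)` is the sum of the ranges of `A ^ k * B` over all `k : ℕ`, and
splitting the input space into its blocks, the range of `A ^ k * B` is the sum over `i` of the
ranges of `A ^ k * B * I_m(:,i)`. Since `A` and `B` respect the order, the input block `i` only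
reaches the states in `↓i`, and `A ^ k * B * I_m(:,i) = I_n(:,↓i) * A(↓i,↓i) ^ k * B(↓i,i)`;
exchanging the two sums gives the theorem.
-/

open Polynomial in
lemma range_pow_mul_le_reach {ι κ : Type*} [Fintype ι] [Fintype κ] [DecidableEq ι]
    (A : Matrix ι ι ℝ) (B : Matrix ι κ ℝ) (k : ℕ) :
    LinearMap.range (A ^ k * B).mulVecLin ≤ reach A B := by
  set p := X ^ k %ₘ A.charpoly
  have hAk : A ^ k = aeval A p := A.pow_eq_aeval_mod_charpoly k
  rcases eq_or_ne p 0 with hp | hp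
  · simp [hAk, hp]
  have hdeg : p.natDegree < Fintype.card ι := by
    rw [natDegree_lt_iff_degree_lt hp, ← A.charpoly_degree_eq_dim]
    exact degree_modByMonic_lt _ A.charpoly_monic
  rw [hAk, aeval_eq_sum_range' hdeg, Matrix.sum_mul]
  rintro _ ⟨v, rfl⟩
  simp only [Matrix.mulVecLin_apply, Matrix.sum_mulVec, Matrix.smul_mul, Matrix.smul_mulVec]
  refine Submodule.sum_mem _ fun j hj => Submodule.smul_mem _ _ ?_
  exact Submodule.mem_iSup_of_mem (⟨j, Finset.mem_range.1 hj⟩ : Fin _) ⟨v, rfl⟩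

lemma reach_eq_iSup_range_pow {ι κ : Type*} [Fintype ι] [Fintype κ] [DecidableEq ι]
    (A : Matrix ι ι ℝ) (B : Matrix ι κ ℝ) :
    reach A B = ⨆ k : ℕ, LinearMap.range (A ^ k * B).mulVecLin :=
  le_antisymm (iSup_le fun k => le_iSup (fun k : ℕ => LinearMap.range (A ^ k * B).mulVecLin) k)
    (iSup_le (range_pow_mul_le_reach A B))

@[simp]
lemma mul_embMat_apply {ι : Type*} [Fintype ι] {n : P → ℕ} (G : Matrix ι (BIdx n) ℝ)
    (S : Set P) (a : ι) (c : {b : BIdx n // b.1 ∈ S}) :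
    (G * embMat n S) a c = G a c := by
  simp [Matrix.mul_apply, embMat]

omit [Fintype P] in
@[simp]
lemma embMat_mul_apply {κ : Type*} {n : P → ℕ} (S : Set P) [Fintype {b : BIdx n // b.1 ∈ S}]
    (X : Matrix {b : BIdx n // b.1 ∈ S} κ ℝ) (a : BIdx n) (c : κ) :
    (embMat n S * X) a c = if h : a.1 ∈ S then X ⟨a, h⟩ c else 0 := by
  split_ifs with h
  · rw [Matrix.mul_apply, Finset.sum_eq_single ⟨a, h⟩] <;> simp +contextual [embMat, eq_comm]
  · refine Finset.sum_eq_zero fun b _ => ?_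
    have : a ≠ b := fun hab => h (hab ▸ b.2)
    simp [embMat, this]

lemma sum_embMat_singleton_mul_transpose (n : P → ℕ) :
    ∑ i : P, embMat n {i} * (embMat n {i})ᵀ = 1 := by
  ext p q
  simp only [Matrix.sum_apply, embMat_mul_apply]
  simp [Matrix.one_apply, embMat, eq_comm]

lemma range_mulVecLin_eq_iSup_range_mul_embMat {ι : Type*} [Fintype ι] {m : P → ℕ}
    (M : Matrix ι (BIdx m) ℝ) :
    LinearMap.range M.mulVecLin = ⨆ i : P, LinearMap.range (M * embMat m {i}).mulVecLin := by
  refine le_antisymm ?_ (iSup_le fun i => ?_)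
  · rintro _ ⟨v, rfl⟩
    have hv : M *ᵥ v = ∑ i : P, (M * embMat m {i}) *ᵥ ((embMat m {i})ᵀ *ᵥ v) := by
      simp only [Matrix.mulVec_mulVec, Matrix.mul_assoc, ← Matrix.sum_mulVec, ← Matrix.mul_sum,
        sum_embMat_singleton_mul_transpose, Matrix.mul_one]
    rw [Matrix.mulVecLin_apply, hv]
    exact Submodule.sum_mem _ fun i _ => Submodule.mem_iSup_of_mem i ⟨_, rfl⟩
  · rw [Matrix.mulVecLin_mul]
    exact LinearMap.range_comp_le_range _ _

lemma mul_embMat_eq_embMat_mul_bcmp {n m : P → ℕ} (G : Matrix (BIdx n) (BIdx m) ℝ)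
    (Q S : Set P) [Fintype {a : BIdx n // a.1 ∈ Q}]
    (hG : ∀ a b, a.1 ∉ Q → b.1 ∈ S → G a b = 0) :
    G * embMat m S = embMat n Q * bcmp G Q S := by
  ext a c
  rw [mul_embMat_apply, embMat_mul_apply]
  split_ifs with ha
  · rfl
  · exact hG a c ha c.2

lemma Inc.mul_embMat {le : P → P → Prop} {n m : P → ℕ} {G : Matrix (BIdx n) (BIdx m) ℝ}
    (hG : Inc le G) (S : Set P) [Fintype {a : BIdx n // a.1 ∈ downSet le S}] :
    G * embMat m S = embMat n (downSet le S) * bcmp G (downSet le S) S :=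
  mul_embMat_eq_embMat_mul_bcmp G _ S fun a b ha hb =>
    hG a b fun hab => ha ⟨b.1, hb, hab⟩

lemma Inc.mul_embMat_downSet [Preorder P] {n : P → ℕ} {A : Matrix (BIdx n) (BIdx n) ℝ}
    (hA : Inc (· ≤ ·) A) (S : Set P) [Fintype {a : BIdx n // a.1 ∈ downSet (· ≤ ·) S}] :
    A * embMat n (downSet (· ≤ ·) S) =
      embMat n (downSet (· ≤ ·) S) * bcmp A (downSet (· ≤ ·) S) (downSet (· ≤ ·) S) :=
  mul_embMat_eq_embMat_mul_bcmp A _ _ fun a b ha ⟨j, hj, hbj⟩ =>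
    hA a b fun hab => ha ⟨j, hj, le_trans hab hbj⟩

lemma pow_mul_mul_embMat_eq [Preorder P] {n m : P → ℕ} {A : Matrix (BIdx n) (BIdx n) ℝ}
    {B : Matrix (BIdx n) (BIdx m) ℝ} (hA : Inc (· ≤ ·) A) (hB : Inc (· ≤ ·) B) (S : Set P)
    [Fintype {a : BIdx n // a.1 ∈ downSet (· ≤ ·) S}] (k : ℕ) :
    A ^ k * B * embMat m S = embMat n (downSet (· ≤ ·) S) *
      (bcmp A (downSet (· ≤ ·) S) (downSet (· ≤ ·) S) ^ k * bcmp B (downSet (· ≤ ·) S) S) := by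
  induction k with
  | zero => simpa using hB.mul_embMat S
  | succ k ih =>
    calc A ^ (k + 1) * B * embMat m S = A * (A ^ k * B * embMat m S) := by
          simp only [pow_succ', Matrix.mul_assoc]
      _ = A * embMat n (downSet (· ≤ ·) S) *
          (bcmp A (downSet (· ≤ ·) S) (downSet (· ≤ ·) S) ^ k * bcmp B (downSet (· ≤ ·) S) S) := by
          rw [ih, Matrix.mul_assoc]
      _ = _ := by
          rw [hA.mul_embMat_downSet, pow_succ']
          simp only [Matrix.mul_assoc]

/-- For a poset-causal system `Σ_P ∼ (A,B,C,D)`, the reachable subspace of the global pair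
`(A,B)` equals the sum over `i ∈ P` of the embeddings into the global state space of the
`i`-downstream reachable subspaces: `R(A,B) = Σ_{i∈P} I_n(:,↓i) R_i`. -/
theorem reach_eq_sup_downstream [PartialOrder P] (n m : P → ℕ)
    (A : Matrix (BIdx n) (BIdx n) ℝ) (B : Matrix (BIdx n) (BIdx m) ℝ)
    (hA : Inc (· ≤ ·) A) (hB : Inc (· ≤ ·) B) :
    reach A B = ⨆ i : P, Ri (· ≤ ·) A B i := by
  calc reach A B = ⨆ (k : ℕ) (i : P), LinearMap.range (A ^ k * B * embMat m {i}).mulVecLin := by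
        simp_rw [reach_eq_iSup_range_pow, ← range_mulVecLin_eq_iSup_range_mul_embMat]
    _ = ⨆ i : P, Ri (· ≤ ·) A B i := by
      simp_rw [Ri, reach_eq_iSup_range_pow, Submodule.map_iSup, pow_mul_mul_embMat_eq hA hB,
        Matrix.mulVecLin_mul, LinearMap.range_comp]
      rw [iSup_comm]
end

section
/- For a poset-causal system and each j ∈ P, the local component of the weakly upstream reachable subspace equals the orthogonal projection of the global reachable subspace onto the j-th local state space: R̃_j = P_{X_j} R(A,B). -/
open Matrix

attribute [local instance] Classical.propDecidable

variable {P : Type*} [Fintype P] [DecidableEq P]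

section AuxWK
open Polynomial

lemma wk_mul_emb_apply {n m : P → ℕ} (G : Matrix (BIdx n) (BIdx m) ℝ) (T : Set P)
    (a : BIdx n) (q : {a : BIdx m // a.1 ∈ T}) :
    (G * embMat m T) a q = G a q.val := by
  simp [Matrix.mul_apply, embMat, mul_ite]

lemma wk_emb_mul_apply {n : P → ℕ} {ι : Type*} [Fintype ι] (S : Set P)
    (H : Matrix {a : BIdx n // a.1 ∈ S} ι ℝ) (a : BIdx n) (q : ι) :
    (embMat n S * H) a q = if h : a.1 ∈ S then H ⟨a, h⟩ q else 0 := by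
  rw [Matrix.mul_apply]
  by_cases h : a.1 ∈ S
  · rw [dif_pos h, Finset.sum_eq_single ⟨a, h⟩]
    · simp [embMat]
    · intro p _ hp
      simp only [embMat, Matrix.of_apply, ite_mul, one_mul, zero_mul, ite_eq_right_iff]
      intro he; exact absurd (Subtype.ext he.symm) hp
    · simp
  · rw [dif_neg h]
    apply Finset.sum_eq_zero
    intro p _
    simp only [embMat, Matrix.of_apply, ite_mul, one_mul, zero_mul, ite_eq_right_iff]
    intro he; exact absurd (he ▸ p.2) h

lemma wk_emb_factor {n m : P → ℕ} (G : Matrix (BIdx n) (BIdx m) ℝ) (S T : Set P)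
    (h : ∀ a b, b.1 ∈ T → G a b ≠ 0 → a.1 ∈ S) :
    G * embMat m T = embMat n S * bcmp G S T := by
  ext a q
  rw [wk_mul_emb_apply, wk_emb_mul_apply]
  by_cases hm : a.1 ∈ S
  · rw [dif_pos hm]; rfl
  · rw [dif_neg hm]
    by_contra hne
    exact hm (h a q.val q.2 hne)

lemma wk_pow_emb {n : P → ℕ} (A : Matrix (BIdx n) (BIdx n) ℝ) (S : Set P)
    (h : A * embMat n S = embMat n S * bcmp A S S) (k : ℕ) :
    A ^ k * embMat n S = embMat n S * (bcmp A S S) ^ k := by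
  induction k with
  | zero => simp
  | succ k ih =>
    rw [pow_succ, pow_succ, Matrix.mul_assoc, h, ← Matrix.mul_assoc, ih, Matrix.mul_assoc]

lemma wk_sum_mulVec {ι κ α : Type*} [Fintype κ] (s : Finset α)
    (f : α → Matrix ι κ ℝ) (v : κ → ℝ) :
    (∑ l ∈ s, f l) *ᵥ v = ∑ l ∈ s, (f l) *ᵥ v := by
  ext i
  simp [Matrix.mulVec, dotProduct, Matrix.sum_apply, Finset.sum_mul]
  rw [Finset.sum_comm]

lemma wk_range_pow_mul_le {ι κ : Type*} [Fintype ι] [Fintype κ] [DecidableEq ι]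
    (A : Matrix ι ι ℝ) (B : Matrix ι κ ℝ) (k : ℕ) :
    LinearMap.range ((A ^ k * B).mulVecLin) ≤ reach A B := by
  rcases Nat.eq_zero_or_pos (Fintype.card ι) with hd | hd
  · have : IsEmpty ι := Fintype.card_eq_zero_iff.mp hd
    rintro x ⟨v, rfl⟩
    have hz : (A ^ k * B).mulVecLin v = 0 := funext fun a => (IsEmpty.false a).elim
    rw [hz]; exact Submodule.zero_mem _
  · have hmon : (A.charpoly).Monic := A.charpoly_monic
    have hdeg : (A.charpoly).natDegree = Fintype.card ι := A.charpoly_natDegree_eq_dim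
    have hne1 : A.charpoly ≠ 1 := by
      intro h1
      rw [h1, Polynomial.natDegree_one] at hdeg
      omega
    have hlt : (X ^ k %ₘ A.charpoly).natDegree < Fintype.card ι := by
      rw [← hdeg]
      exact Polynomial.natDegree_modByMonic_lt _ hmon hne1
    rintro x ⟨v, rfl⟩
    rw [Matrix.pow_eq_aeval_mod_charpoly, Polynomial.aeval_eq_sum_range' hlt,
      Matrix.sum_mul]
    rw [Matrix.mulVecLin_apply, wk_sum_mulVec]
    apply Submodule.sum_mem
    intro l hl
    rw [Finset.mem_range] at hl
    rw [Matrix.smul_mul, Matrix.smul_mulVec]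
    apply Submodule.smul_mem
    apply Submodule.mem_iSup_of_mem (⟨l, hl⟩ : Fin (Fintype.card ι))
    exact ⟨v, rfl⟩

lemma wk_reach_eq_iSup_fin {ι κ : Type*} [Fintype ι] [Fintype κ] [DecidableEq ι]
    (A : Matrix ι ι ℝ) (B : Matrix ι κ ℝ) (N : ℕ) (hN : Fintype.card ι ≤ N) :
    (⨆ k : Fin N, LinearMap.range ((A ^ (k : ℕ) * B).mulVecLin)) = reach A B := by
  apply le_antisymm
  · exact iSup_le fun k => wk_range_pow_mul_le A B k
  · exact iSup_le fun k => le_iSup_of_le (⟨k, lt_of_lt_of_le k.2 hN⟩ : Fin N) le_rfl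

lemma wk_emb_mulVec {n : P → ℕ} (S : Set P) (x : {a : BIdx n // a.1 ∈ S} → ℝ) (p : BIdx n) :
    ((embMat n S) *ᵥ x) p = if h : p.1 ∈ S then x ⟨p, h⟩ else 0 := by
  rw [Matrix.mulVec, dotProduct]
  by_cases h : p.1 ∈ S
  · rw [dif_pos h, Finset.sum_eq_single ⟨p, h⟩]
    · simp [embMat]
    · intro q _ hq
      simp only [embMat, Matrix.of_apply, ite_mul, one_mul, zero_mul, ite_eq_right_iff]
      intro he; exact absurd (Subtype.ext he.symm) hq
    · simp
  · rw [dif_neg h]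
    apply Finset.sum_eq_zero
    intro q _
    simp only [embMat, Matrix.of_apply, ite_mul, one_mul, zero_mul, ite_eq_right_iff]
    intro he; exact absurd (he ▸ q.2) h

lemma wk_range_eq_iSup_blocks {n m : P → ℕ} (M : Matrix (BIdx n) (BIdx m) ℝ) :
    LinearMap.range M.mulVecLin
      = ⨆ i : P, LinearMap.range (M * embMat m {i}).mulVecLin := by
  apply le_antisymm
  · rintro y ⟨x, rfl⟩
    have hx : x = ∑ i : P, (embMat m {i}).mulVecLin (fun q => x q.val) := by
      ext p
      rw [Finset.sum_apply, Finset.sum_eq_single p.1]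
      · rw [Matrix.mulVecLin_apply, Matrix.mulVec, dotProduct,
          Finset.sum_eq_single (⟨p, rfl⟩ : {a : BIdx m // a.1 ∈ ({p.1} : Set P)})]
        · simp [embMat]
        · intro q _ hq
          simp only [embMat, Matrix.of_apply, ite_mul, one_mul, zero_mul, ite_eq_right_iff]
          intro he; exact absurd (Subtype.ext he.symm) hq
        · simp
      · intro i _ hi
        rw [Matrix.mulVecLin_apply, Matrix.mulVec, dotProduct]
        apply Finset.sum_eq_zero
        intro q _
        simp only [embMat, Matrix.of_apply, ite_mul, one_mul, zero_mul, ite_eq_right_iff]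
        intro he
        have hpi : p.1 = i := by rw [he]; exact q.2
        exact absurd hpi.symm hi
      · intro hp; exact absurd (Finset.mem_univ p.1) hp
    rw [hx, map_sum]
    apply Submodule.sum_mem
    intro i _
    apply Submodule.mem_iSup_of_mem i
    rw [Matrix.mulVecLin_mul]
    exact ⟨_, rfl⟩
  · apply iSup_le
    intro i
    rw [Matrix.mulVecLin_mul]
    exact LinearMap.range_comp_le_range _ _

lemma wk_proj_emb_zero {n : P → ℕ} (j : P) (S : Set P) (hj : j ∉ S) :
    projMat n {j} * embMat n S = 0 := by
  ext a q
  rw [Matrix.mul_apply, Matrix.zero_apply]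
  apply Finset.sum_eq_zero
  intro p _
  simp only [projMat, embMat, Matrix.of_apply, Set.mem_singleton_iff, ite_mul, one_mul,
    zero_mul]
  split_ifs with h1 h2
  · exact absurd (h2 ▸ h1.1 ▸ h1.2 : (q.val).1 = j) (fun hq => hj (hq ▸ q.2))
  · rfl
  · rfl

end AuxWK

/-- For a poset-causal system and each `j ∈ P`, the local component of the weakly upstream
reachable subspace equals the orthogonal projection of the global reachable subspace onto the
`j`-th local state space: `R̃_j = Σ_{i∈↑j} P_{X_j} R_i = P_{X_j} R(A,B)`. -/
theorem weakly_upstream_component_eq_proj_reach [PartialOrder P] (n m : P → ℕ)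
    (A : Matrix (BIdx n) (BIdx n) ℝ) (B : Matrix (BIdx n) (BIdx m) ℝ)
    (hA : Inc (· ≤ ·) A) (hB : Inc (· ≤ ·) B) :
    ∀ j : P,
      (⨆ i : P, ⨆ _ : j ≤ i, Submodule.map (projMat n {j}).mulVecLin (Ri (· ≤ ·) A B i)) =
        Submodule.map (projMat n {j}).mulVecLin (reach A B) := by
  intro j
  have hSmem : ∀ i a : P, a ∈ downSet (· ≤ ·) ({i} : Set P) ↔ a ≤ i := by
    intro i a; simp [downSet]
  have hAfac : ∀ i : P, A * embMat n (downSet (· ≤ ·) {i})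
      = embMat n (downSet (· ≤ ·) {i})
        * bcmp A (downSet (· ≤ ·) {i}) (downSet (· ≤ ·) {i}) := by
    intro i
    apply wk_emb_factor
    intro a b hb hne
    have hab : a.1 ≤ b.1 := by
      by_contra hc; exact hne (hA a b hc)
    exact (hSmem i a.1).mpr (le_trans hab ((hSmem i b.1).mp hb))
  have hBfac : ∀ i : P, B * embMat m {i}
      = embMat n (downSet (· ≤ ·) {i}) * bcmp B (downSet (· ≤ ·) {i}) {i} := by
    intro i
    apply wk_emb_factor
    intro a b hb hne
    have hab : a.1 ≤ b.1 := by
      by_contra hc; exact hne (hB a b hc)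
    have hbi : b.1 = i := hb
    exact (hSmem i a.1).mpr (hbi ▸ hab)
  have hfact : ∀ (i : P) (k : ℕ), A ^ k * B * embMat m {i}
      = embMat n (downSet (· ≤ ·) {i})
        * ((bcmp A (downSet (· ≤ ·) {i}) (downSet (· ≤ ·) {i})) ^ k
            * bcmp B (downSet (· ≤ ·) {i}) {i}) := by
    intro i k
    rw [Matrix.mul_assoc, hBfac i, ← Matrix.mul_assoc, wk_pow_emb A _ (hAfac i) k,
      Matrix.mul_assoc]
  have hRi : ∀ i : P,
      (⨆ k : Fin (Fintype.card (BIdx n)),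
          LinearMap.range ((A ^ (k : ℕ) * B * embMat m {i}).mulVecLin))
        = Ri (· ≤ ·) A B i := by
    intro i
    have hcard : Fintype.card {a : BIdx n // a.1 ∈ downSet (· ≤ ·) ({i} : Set P)}
        ≤ Fintype.card (BIdx n) :=
      Fintype.card_le_of_injective Subtype.val Subtype.val_injective
    unfold Ri
    rw [← wk_reach_eq_iSup_fin _ _ (Fintype.card (BIdx n)) hcard, Submodule.map_iSup]
    apply iSup_congr
    intro k
    rw [hfact i k, Matrix.mulVecLin_mul, LinearMap.range_comp]
  have hreach : reach A B = ⨆ i : P, Ri (· ≤ ·) A B i := by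
    unfold reach
    calc (⨆ k : Fin (Fintype.card (BIdx n)),
            LinearMap.range ((A ^ (k : ℕ) * B).mulVecLin))
        = ⨆ k : Fin (Fintype.card (BIdx n)), ⨆ i : P,
            LinearMap.range ((A ^ (k : ℕ) * B * embMat m {i}).mulVecLin) := by
          exact iSup_congr fun k => wk_range_eq_iSup_blocks _
      _ = ⨆ i : P, ⨆ k : Fin (Fintype.card (BIdx n)),
            LinearMap.range ((A ^ (k : ℕ) * B * embMat m {i}).mulVecLin) := iSup_comm
      _ = ⨆ i : P, Ri (· ≤ ·) A B i := iSup_congr hRi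
  have hbot : ∀ i : P, ¬ j ≤ i →
      Submodule.map (projMat n {j}).mulVecLin (Ri (· ≤ ·) A B i) = ⊥ := by
    intro i hji
    have hjS : j ∉ downSet (· ≤ ·) ({i} : Set P) := fun h => hji ((hSmem i j).mp h)
    unfold Ri
    rw [← Submodule.map_comp, ← Matrix.mulVecLin_mul, wk_proj_emb_zero j _ hjS,
      Matrix.mulVecLin_zero, Submodule.map_zero]
  have hsup : (⨆ i : P, ⨆ _ : j ≤ i,
        Submodule.map (projMat n {j}).mulVecLin (Ri (· ≤ ·) A B i))
      = ⨆ i : P, Submodule.map (projMat n {j}).mulVecLin (Ri (· ≤ ·) A B i) := by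
    apply le_antisymm
    · exact iSup_le fun i => iSup_le fun _ =>
        le_iSup (fun i => Submodule.map (projMat n {j}).mulVecLin (Ri (· ≤ ·) A B i)) i
    · apply iSup_le
      intro i
      by_cases h : j ≤ i
      · exact le_iSup_of_le i (le_iSup_of_le h le_rfl)
      · rw [hbot i h]; exact bot_le
  rw [hsup, ← Submodule.map_iSup, ← hreach]
end

section
/- A poset-causal system Σ_P ∼ (A,B,C,D) is weakly locally controllable (i.e., P_{X_i} R_i = X_i for each i ∈ P) if and only if each local pair (A_ii, B_ii) is controllable. -/
open Matrix

attribute [local instance] Classical.propDecidable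

variable {P : Type*} [Fintype P] [DecidableEq P]

set_option linter.unusedSectionVars false

section Stab

variable {ι κ : Type*} [Fintype ι] [Fintype κ] [DecidableEq ι]
  (A : Matrix ι ι ℝ) (B : Matrix ι κ ℝ)

noncomputable def fstep (k : ℕ) : Submodule ℝ (ι → ℝ) :=
  LinearMap.range ((A ^ k * B).mulVecLin)

noncomputable def Vsup (N : ℕ) : Submodule ℝ (ι → ℝ) :=
  ⨆ k : Fin N, fstep A B k

lemma fstep_succ (k : ℕ) :
    fstep A B (k + 1) = Submodule.map A.mulVecLin (fstep A B k) := by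
  unfold fstep
  rw [pow_succ', Matrix.mul_assoc A (A ^ k) B, Matrix.mulVecLin_mul, LinearMap.range_comp]

lemma Vsup_mono : Monotone (Vsup A B) := by
  intro N M h
  exact iSup_le fun k => le_iSup_of_le ⟨k.1, lt_of_lt_of_le k.2 h⟩ le_rfl

lemma fstep_le_Vsup {k N : ℕ} (h : k < N) : fstep A B k ≤ Vsup A B N :=
  le_iSup_of_le ⟨k, h⟩ le_rfl

lemma mapA_Vsup (N : ℕ) :
    Submodule.map A.mulVecLin (Vsup A B N) ≤ Vsup A B (N + 1) := by
  rw [Vsup, Submodule.map_iSup]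
  exact iSup_le fun k => by
    rw [← fstep_succ]
    exact fstep_le_Vsup A B (by omega)

lemma fstep_le_of_stab {N : ℕ} (hst : fstep A B N ≤ Vsup A B N) :
    ∀ k, fstep A B k ≤ Vsup A B N := by
  have hsucc : Vsup A B (N + 1) ≤ Vsup A B N := by
    refine iSup_le fun k => ?_
    rcases Nat.lt_or_ge k.1 N with h | h
    · exact fstep_le_Vsup A B h
    · have : k.1 = N := by omega
      rw [this]; exact hst
  have key : ∀ j, fstep A B (N + j) ≤ Vsup A B N := by
    intro j
    induction j with
    | zero => exact hst
    | succ j ih =>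
      have : fstep A B (N + j + 1) ≤ Vsup A B (N + 1) := by
        rw [fstep_succ]
        exact le_trans (Submodule.map_mono ih) (mapA_Vsup A B N)
      exact le_trans this hsucc
  intro k
  rcases Nat.lt_or_ge k N with h | h
  · exact fstep_le_Vsup A B h
  · have : k = N + (k - N) := by omega
    rw [this]; exact key _

lemma exists_stab : ∃ N ≤ Fintype.card ι, fstep A B N ≤ Vsup A B N := by
  by_contra hc
  push_neg at hc
  have hstrict : ∀ N ≤ Fintype.card ι, Vsup A B N < Vsup A B (N + 1) := by
    intro N hN
    refine lt_of_le_of_ne (Vsup_mono A B (by omega)) fun he => ?_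
    exact hc N hN (he ▸ fstep_le_Vsup A B (by omega))
  have hrank : ∀ N ≤ Fintype.card ι + 1, N ≤ Module.finrank ℝ (Vsup A B N) := by
    intro N hN
    induction N with
    | zero => omega
    | succ N ih =>
      have h1 : N ≤ Module.finrank ℝ (Vsup A B N) := ih (by omega)
      have h2 := Submodule.finrank_lt_finrank_of_lt (hstrict N (by omega))
      omega
  have h := hrank (Fintype.card ι + 1) le_rfl
  have h2 : Module.finrank ℝ (Vsup A B (Fintype.card ι + 1)) ≤
      Module.finrank ℝ (ι → ℝ) := Submodule.finrank_le _
  rw [Module.finrank_fintype_fun_eq_card] at h2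
  omega

lemma Vsup_eq_reach {N : ℕ} (hN : Fintype.card ι ≤ N) :
    Vsup A B N = reach A B := by
  obtain ⟨N0, hN0, hst⟩ := exists_stab A B
  have h1 : ∀ M, Fintype.card ι ≤ M → Vsup A B M = Vsup A B N0 := by
    intro M hM
    refine le_antisymm (iSup_le fun k => fstep_le_of_stab A B hst k.1)
      (Vsup_mono A B (le_trans hN0 hM))
  have : reach A B = Vsup A B (Fintype.card ι) := rfl
  rw [this, h1 N hN, h1 (Fintype.card ι) le_rfl]


lemma sup_range_eq_reach {ι κ : Type*} [Fintype ι] [Fintype κ] [DecidableEq ι]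
    (A : Matrix ι ι ℝ) (B : Matrix ι κ ℝ) {N : ℕ} (hN : Fintype.card ι ≤ N) :
    (⨆ k : Fin N, LinearMap.range ((A ^ (k : ℕ) * B).mulVecLin)) = reach A B :=
  Vsup_eq_reach A B hN

end Stab

section AuxSel


noncomputable def FiM (n : P → ℕ) (i : P) : Matrix (BIdx n) (Fin (n i)) ℝ :=
  Matrix.of fun p a => if p = ⟨i, a⟩ then 1 else 0

noncomputable def JiM (m : P → ℕ) (i : P) :
    Matrix (Fin (m i)) {a : BIdx m // a.1 ∈ ({i} : Set P)} ℝ :=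
  Matrix.of fun b q => if (⟨i, b⟩ : BIdx m) = q.1 then 1 else 0

noncomputable def RsM (n : P → ℕ) (le : P → P → Prop) (i : P) :
    Matrix (Fin (n i)) {a : BIdx n // a.1 ∈ downSet le {i}} ℝ :=
  Matrix.of fun a q => if (⟨i, a⟩ : BIdx n) = q.1 then 1 else 0

variable (n m : P → ℕ) (i : P)

lemma FtF : (FiM n i)ᵀ * FiM n i = 1 := by
  ext a b
  simp only [Matrix.mul_apply, Matrix.transpose_apply, FiM, Matrix.of_apply,
    Matrix.one_apply, ite_mul, one_mul, zero_mul]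
  rw [Finset.sum_ite_eq' Finset.univ (⟨i, a⟩ : BIdx n)]
  simp [Sigma.mk.inj_iff]

lemma proj_eq : projMat n {i} = FiM n i * (FiM n i)ᵀ := by
  ext p q
  simp only [Matrix.mul_apply, Matrix.transpose_apply, FiM, Matrix.of_apply, projMat,
    ite_mul, one_mul, zero_mul, mul_ite, mul_one, mul_zero]
  obtain ⟨p1, p2⟩ := p
  by_cases hp : p1 = i
  · subst hp
    rw [Fintype.sum_eq_single p2 (by intro b hb; simp [Sigma.mk.inj_iff, Ne.symm hb])]
    simp [Sigma.mk.inj_iff, eq_comm]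
  · rw [Finset.sum_eq_zero (by intro b _; simp [Sigma.mk.inj_iff, hp])]
    simp [hp]

lemma JJt : JiM m i * (JiM m i)ᵀ = 1 := by
  ext a b
  simp only [Matrix.mul_apply, Matrix.transpose_apply, JiM, Matrix.of_apply,
    Matrix.one_apply, ite_mul, one_mul, zero_mul, mul_ite, mul_one, mul_zero]
  rw [Fintype.sum_eq_single (⟨⟨i, a⟩, rfl⟩ : {a : BIdx m // a.1 ∈ ({i} : Set P)})
    (by intro q hq
        have hne : (⟨i, a⟩ : BIdx m) ≠ ↑q := fun h => hq (Subtype.ext h.symm)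
        simp [hne])]
  simp [Sigma.mk.inj_iff, eq_comm]

section Order
variable [PartialOrder P]

lemma mem_downSet_self : i ∈ downSet (· ≤ ·) ({i} : Set P) :=
  ⟨i, rfl, le_refl i⟩

lemma PE_eq :
    projMat n {i} * embMat n (downSet (· ≤ ·) {i}) = FiM n i * RsM n (· ≤ ·) i := by
  ext p q
  simp only [Matrix.mul_apply, projMat, embMat, FiM, RsM, Matrix.of_apply,
    ite_mul, one_mul, zero_mul, mul_ite, mul_one, mul_zero]
  rw [Finset.sum_ite_eq' Finset.univ (q : BIdx n)]
  obtain ⟨p1, p2⟩ := p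
  by_cases hp : p1 = i
  · subst hp
    rw [Fintype.sum_eq_single p2 (by intro b hb; simp [Sigma.mk.inj_iff, Ne.symm hb])]
    simp [eq_comm]
  · rw [Finset.sum_eq_zero (by intro b _; simp [Sigma.mk.inj_iff, hp])]
    simp [hp, eq_comm]

lemma RA_eq (A : Matrix (BIdx n) (BIdx n) ℝ) (hA : Inc (· ≤ ·) A) :
    RsM n (· ≤ ·) i * bcmp A (downSet (· ≤ ·) {i}) (downSet (· ≤ ·) {i}) =
      (A.submatrix (fun a => (⟨i, a⟩ : BIdx n)) (fun a => (⟨i, a⟩ : BIdx n))) *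
        RsM n (· ≤ ·) i := by
  ext a q
  simp only [Matrix.mul_apply, RsM, bcmp, Matrix.of_apply, Matrix.submatrix_apply,
    ite_mul, one_mul, zero_mul, mul_ite, mul_one, mul_zero]
  rw [Fintype.sum_eq_single
    (⟨⟨i, a⟩, mem_downSet_self i⟩ : {a : BIdx n // a.1 ∈ downSet (· ≤ ·) ({i} : Set P)})
    (by intro r hr
        have hne : (⟨i, a⟩ : BIdx n) ≠ ↑r := fun h => hr (Subtype.ext h.symm)
        simp [hne])]
  simp only [if_pos rfl]
  obtain ⟨⟨q1, q2⟩, hq⟩ := q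
  by_cases hq1 : q1 = i
  · subst hq1
    rw [Fintype.sum_eq_single q2 (by intro b hb; simp [Sigma.mk.inj_iff, hb])]
    simp
  · rw [Finset.sum_eq_zero (by intro b _; simp [Sigma.mk.inj_iff, Ne.symm hq1])]
    have : ¬ i ≤ q1 := by
      obtain ⟨j, hj, hle⟩ := hq
      simp only [Set.mem_singleton_iff] at hj
      subst hj
      exact fun h => hq1 (le_antisymm hle h)
    exact hA ⟨i, a⟩ ⟨q1, q2⟩ this

lemma RB_eq (B : Matrix (BIdx n) (BIdx m) ℝ) :
    RsM n (· ≤ ·) i * bcmp B (downSet (· ≤ ·) {i}) {i} =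
      (B.submatrix (fun a => (⟨i, a⟩ : BIdx n)) (fun a => (⟨i, a⟩ : BIdx m))) * JiM m i := by
  ext a q
  simp only [Matrix.mul_apply, RsM, bcmp, JiM, Matrix.of_apply, Matrix.submatrix_apply,
    ite_mul, one_mul, zero_mul, mul_ite, mul_one, mul_zero]
  rw [Fintype.sum_eq_single
    (⟨⟨i, a⟩, mem_downSet_self i⟩ : {a : BIdx n // a.1 ∈ downSet (· ≤ ·) ({i} : Set P)})
    (by intro r hr
        have hne : (⟨i, a⟩ : BIdx n) ≠ ↑r := fun h => hr (Subtype.ext h.symm)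
        simp [hne])]
  simp only [if_pos rfl]
  obtain ⟨⟨q1, q2⟩, hq⟩ := q
  have hq1 : q1 = i := hq
  subst hq1
  rw [Fintype.sum_eq_single q2 (by intro b hb; simp [Sigma.mk.inj_iff, hb])]
  simp

lemma RApow_eq (A : Matrix (BIdx n) (BIdx n) ℝ) (hA : Inc (· ≤ ·) A) (k : ℕ) :
    RsM n (· ≤ ·) i * (bcmp A (downSet (· ≤ ·) {i}) (downSet (· ≤ ·) {i})) ^ k =
      ((A.submatrix (fun a => (⟨i, a⟩ : BIdx n)) (fun a => (⟨i, a⟩ : BIdx n))) ^ k) *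
        RsM n (· ≤ ·) i := by
  induction k with
  | zero => simp
  | succ k ih =>
    rw [pow_succ, pow_succ, ← Matrix.mul_assoc, ih, Matrix.mul_assoc, RA_eq n i A hA,
      ← Matrix.mul_assoc]


lemma full_mat_eq (A : Matrix (BIdx n) (BIdx n) ℝ) (B : Matrix (BIdx n) (BIdx m) ℝ)
    (hA : Inc (· ≤ ·) A) (k : ℕ) :
    projMat n {i} * (embMat n (downSet (· ≤ ·) {i}) *
      ((bcmp A (downSet (· ≤ ·) {i}) (downSet (· ≤ ·) {i})) ^ k *
        bcmp B (downSet (· ≤ ·) {i}) {i})) =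
    FiM n i * (((A.submatrix (fun a => (⟨i, a⟩ : BIdx n)) (fun a => (⟨i, a⟩ : BIdx n))) ^ k *
        (B.submatrix (fun a => (⟨i, a⟩ : BIdx n)) (fun a => (⟨i, a⟩ : BIdx m)))) * JiM m i) := by
  rw [← Matrix.mul_assoc (projMat n {i}) (embMat n (downSet (· ≤ ·) {i})) _,
    PE_eq n i,
    Matrix.mul_assoc (FiM n i) (RsM n (· ≤ ·) i) _,
    ← Matrix.mul_assoc (RsM n (· ≤ ·) i)
      ((bcmp A (downSet (· ≤ ·) {i}) (downSet (· ≤ ·) {i})) ^ k)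
      (bcmp B (downSet (· ≤ ·) {i}) {i}),
    RApow_eq n i A hA k,
    Matrix.mul_assoc
      ((A.submatrix (fun a => (⟨i, a⟩ : BIdx n)) (fun a => (⟨i, a⟩ : BIdx n))) ^ k)
      (RsM n (· ≤ ·) i) (bcmp B (downSet (· ≤ ·) {i}) {i}),
    RB_eq n m i B,
    ← Matrix.mul_assoc
      ((A.submatrix (fun a => (⟨i, a⟩ : BIdx n)) (fun a => (⟨i, a⟩ : BIdx n))) ^ k)
      (B.submatrix (fun a => (⟨i, a⟩ : BIdx n)) (fun a => (⟨i, a⟩ : BIdx m))) (JiM m i)]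

lemma JiM_surj : Function.Surjective (JiM m i).mulVecLin := by
  have hJt : (JiM m i).mulVecLin ∘ₗ (JiM m i)ᵀ.mulVecLin = LinearMap.id := by
    rw [← Matrix.mulVecLin_mul, JJt, Matrix.mulVecLin_one]
  exact fun y => ⟨(JiM m i)ᵀ.mulVecLin y, by rw [← LinearMap.comp_apply, hJt]; rfl⟩

lemma step_subspace_eq (A : Matrix (BIdx n) (BIdx n) ℝ) (B : Matrix (BIdx n) (BIdx m) ℝ)
    (hA : Inc (· ≤ ·) A) (k : ℕ) :
    Submodule.map (projMat n {i}).mulVecLin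
      (Submodule.map (embMat n (downSet (· ≤ ·) {i})).mulVecLin
        (LinearMap.range (((bcmp A (downSet (· ≤ ·) {i}) (downSet (· ≤ ·) {i})) ^ k *
          bcmp B (downSet (· ≤ ·) {i}) {i}).mulVecLin))) =
    Submodule.map (FiM n i).mulVecLin (LinearMap.range
      (((A.submatrix (fun a => (⟨i, a⟩ : BIdx n)) (fun a => (⟨i, a⟩ : BIdx n))) ^ k *
        (B.submatrix (fun a => (⟨i, a⟩ : BIdx n)) (fun a => (⟨i, a⟩ : BIdx m)))).mulVecLin)) := by
  rw [← LinearMap.range_comp, ← Matrix.mulVecLin_mul, ← LinearMap.range_comp,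
    ← Matrix.mulVecLin_mul, full_mat_eq n m i A B hA k, Matrix.mulVecLin_mul,
    Matrix.mulVecLin_mul, LinearMap.range_comp, LinearMap.range_comp,
    LinearMap.range_eq_top.mpr (JiM_surj m i), Submodule.map_top]

end Order


end AuxSel

/-- A poset-causal system `Σ_P ∼ (A,B,C,D)` is weakly locally controllable
(`P_{X_i} R_i = X_i` for each `i ∈ P`) if and only if each local pair `(A_ii, B_ii)` is
controllable. -/
theorem weaklyLocallyControllable_iff_local_pairs_controllable [PartialOrder P]
    (n m : P → ℕ)
    (A : Matrix (BIdx n) (BIdx n) ℝ) (B : Matrix (BIdx n) (BIdx m) ℝ)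
    (hA : Inc (· ≤ ·) A) (hB : Inc (· ≤ ·) B) :
    (∀ i : P, Submodule.map (projMat n {i}).mulVecLin (Ri (· ≤ ·) A B i) = coordSub n {i}) ↔
      (∀ i : P, reach (A.submatrix (fun a => (⟨i, a⟩ : BIdx n)) (fun a => (⟨i, a⟩ : BIdx n)))
        (B.submatrix (fun a => (⟨i, a⟩ : BIdx n)) (fun a => (⟨i, a⟩ : BIdx m))) = ⊤) := by
  refine forall_congr' fun i => ?_
  -- left-inverse facts for F = FiM n i
  have hFt : (FiM n i)ᵀ.mulVecLin ∘ₗ (FiM n i).mulVecLin = LinearMap.id := by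
    rw [← Matrix.mulVecLin_mul, FtF, Matrix.mulVecLin_one]
  have hFinj : Function.Injective (FiM n i).mulVecLin := by
    intro x y hxy
    have h1 := congrArg (FiM n i)ᵀ.mulVecLin hxy
    rwa [← LinearMap.comp_apply, ← LinearMap.comp_apply, hFt, LinearMap.id_apply,
      LinearMap.id_apply] at h1
  have hFtsurj : Function.Surjective (FiM n i)ᵀ.mulVecLin := fun y =>
    ⟨(FiM n i).mulVecLin y, by rw [← LinearMap.comp_apply, hFt]; rfl⟩
  -- the coordinate subspace as the image of F
  have hcoord : coordSub n ({i} : Set P) = Submodule.map (FiM n i).mulVecLin ⊤ := by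
    rw [coordSub, proj_eq n i, Matrix.mulVecLin_mul, LinearMap.range_comp,
      LinearMap.range_eq_top.mpr hFtsurj]
  -- the cardinality bound
  have hcard : Fintype.card (Fin (n i)) ≤
      Fintype.card {a : BIdx n // a.1 ∈ downSet (· ≤ ·) ({i} : Set P)} := by
    rw [Fintype.card_fin]
    have hinj : Function.Injective
        (fun a : Fin (n i) => (⟨⟨i, a⟩, mem_downSet_self i⟩ :
          {a : BIdx n // a.1 ∈ downSet (· ≤ ·) ({i} : Set P)})) := by
      intro a b hab
      have h2 := congrArg Subtype.val hab
      simpa [Sigma.mk.inj_iff] using h2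
    simpa using Fintype.card_le_of_injective _ hinj
  -- the left-hand side as the image of the local reachable subspace
  have hL : Submodule.map (projMat n ({i} : Set P)).mulVecLin (Ri (· ≤ ·) A B i) =
      Submodule.map (FiM n i).mulVecLin
        (reach (A.submatrix (fun a => (⟨i, a⟩ : BIdx n)) (fun a => (⟨i, a⟩ : BIdx n)))
          (B.submatrix (fun a => (⟨i, a⟩ : BIdx n)) (fun a => (⟨i, a⟩ : BIdx m)))) := by
    rw [Ri, reach, Submodule.map_iSup, Submodule.map_iSup]
    have hstep : ∀ k : Fin (Fintype.card
        {a : BIdx n // a.1 ∈ downSet (· ≤ ·) ({i} : Set P)}),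
        Submodule.map (projMat n {i}).mulVecLin
          (Submodule.map (embMat n (downSet (· ≤ ·) {i})).mulVecLin
            (LinearMap.range (((bcmp A (downSet (· ≤ ·) {i}) (downSet (· ≤ ·) {i})) ^ (k : ℕ) *
              bcmp B (downSet (· ≤ ·) {i}) {i}).mulVecLin))) =
        Submodule.map (FiM n i).mulVecLin (LinearMap.range
          (((A.submatrix (fun a => (⟨i, a⟩ : BIdx n)) (fun a => (⟨i, a⟩ : BIdx n))) ^ (k : ℕ) *
            (B.submatrix (fun a => (⟨i, a⟩ : BIdx n))
              (fun a => (⟨i, a⟩ : BIdx m)))).mulVecLin)) :=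
      fun k => step_subspace_eq n m i A B hA (k : ℕ)
    rw [iSup_congr hstep, ← Submodule.map_iSup, sup_range_eq_reach _ _ hcard]
  rw [hL, hcoord]
  constructor
  · intro h
    exact Submodule.map_injective_of_injective hFinj h
  · intro h
    rw [h]
end

section
/- If a poset-causal system is weakly locally controllable (every local pair (A_ii, B_ii) is controllable), then the global system is controllable, i.e., R(A,B) = X. -/
open Matrix

attribute [local instance] Classical.propDecidable

variable {P : Type*} [Fintype P] [DecidableEq P]

/-!
Argue dually: a row vector `v` annihilating `A ^ k * B` for all `k` must vanish. Pick a block `i`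
minimal among those on which `v` is nonzero. Since an entry `G a b` of `A` or `B` can be nonzero
only if `a.1 ≤ b.1`, multiplying `v` by `A` keeps it zero on the blocks below `i`, and block `i` of
`v ᵥ* (A ^ k * B)` is then `vᵢ ᵥ* (A_ii ^ k * B_ii)`. So `vᵢ` annihilates the local pair, and local
controllability forces `vᵢ = 0`, contradicting the choice of `i`.
-/

section Reach

variable {ι κ : Type*} [Fintype ι] [Fintype κ] [DecidableEq ι]

lemma reach_le_ker_dotProductEquiv_iff (A : Matrix ι ι ℝ) (B : Matrix ι κ ℝ) (v : ι → ℝ) :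
    reach A B ≤ LinearMap.ker (dotProductEquiv ℝ ι v) ↔
      ∀ k < Fintype.card ι, v ᵥ* (A ^ k * B) = 0 := by
  simp only [reach, iSup_le_iff, LinearMap.range_le_ker_iff, Fin.forall_iff]
  refine forall₂_congr fun k _ => ⟨fun h => ?_, fun h => ?_⟩
  · funext b
    simpa only [LinearMap.comp_apply, mulVecLin_apply, dotProductEquiv_apply_apply,
      dotProduct_mulVec, dotProduct_single, mul_one, LinearMap.zero_apply, Pi.zero_apply]
      using LinearMap.congr_fun h (Pi.single b 1)
  · ext x
    simp only [LinearMap.comp_apply, mulVecLin_apply, dotProductEquiv_apply_apply,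
      dotProduct_mulVec, h, zero_dotProduct, LinearMap.zero_apply]

theorem reach_eq_top_iff (A : Matrix ι ι ℝ) (B : Matrix ι κ ℝ) :
    reach A B = ⊤ ↔ ∀ v : ι → ℝ, (∀ k < Fintype.card ι, v ᵥ* (A ^ k * B) = 0) → v = 0 := by
  constructor
  · intro h v hv
    have hker := (reach_le_ker_dotProductEquiv_iff A B v).mpr hv
    rw [h, top_le_iff, LinearMap.ker_eq_top] at hker
    exact (dotProductEquiv ℝ ι).map_eq_zero_iff.mp hker
  · intro h
    by_contra hne
    obtain ⟨φ, hφ, hle⟩ := (reach A B).exists_le_ker_of_lt_top (lt_top_iff_ne_top.mpr hne)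
    obtain ⟨v, rfl⟩ := (dotProductEquiv ℝ ι).surjective φ
    exact hφ (by rw [h v ((reach_le_ker_dotProductEquiv_iff A B v).mp hle), map_zero])

end Reach

abbrev BIdx.mk (n : P → ℕ) (i : P) : Fin (n i) → BIdx n := fun a => ⟨i, a⟩

section BlockTriangular

variable {n m : P → ℕ} {i : P} {w : BIdx n → ℝ}

omit [DecidableEq P] in
lemma vecMul_apply_eq_zero_of_lt [Preorder P] {M : Matrix (BIdx n) (BIdx m) ℝ}
    (hM : Inc (· ≤ ·) M) (hw : ∀ a : BIdx n, a.1 < i → w a = 0) {b : BIdx m} (hb : b.1 < i) :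
    (w ᵥ* M) b = 0 := by
  refine Finset.sum_eq_zero fun a _ => show w a * M a b = 0 from ?_
  by_cases hab : a.1 ≤ b.1
  · rw [hw a (hab.trans_lt hb), zero_mul]
  · rw [hM a b hab, mul_zero]

lemma vecMul_pow_apply_eq_zero_of_lt [Preorder P] {A : Matrix (BIdx n) (BIdx n) ℝ}
    (hA : Inc (· ≤ ·) A) (hw : ∀ a : BIdx n, a.1 < i → w a = 0) (k : ℕ) :
    ∀ a : BIdx n, a.1 < i → (w ᵥ* A ^ k) a = 0 := by
  induction k with
  | zero => simpa using hw
  | succ k ih =>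
    intro a ha
    rw [pow_succ, ← vecMul_vecMul]
    exact vecMul_apply_eq_zero_of_lt hA ih ha

omit [DecidableEq P] in
lemma vecMul_comp_bIdx_mk [PartialOrder P] {M : Matrix (BIdx n) (BIdx m) ℝ}
    (hM : Inc (· ≤ ·) M) (hw : ∀ a : BIdx n, a.1 < i → w a = 0) :
    (w ᵥ* M) ∘ BIdx.mk m i = (w ∘ BIdx.mk n i) ᵥ* M.submatrix (BIdx.mk n i) (BIdx.mk m i) := by
  funext γ
  simp only [Function.comp_apply, vecMul, dotProduct, submatrix_apply]
  rw [← Finset.univ_sigma_univ, Finset.sum_sigma]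
  refine Finset.sum_eq_single_of_mem i (Finset.mem_univ i) fun j _ hji => ?_
  refine Finset.sum_eq_zero fun α _ => ?_
  by_cases hj : j ≤ i
  · rw [hw ⟨j, α⟩ (lt_of_le_of_ne hj hji), zero_mul]
  · rw [hM ⟨j, α⟩ ⟨i, γ⟩ hj, mul_zero]

lemma vecMul_pow_mul_comp_bIdx_mk [PartialOrder P] {A : Matrix (BIdx n) (BIdx n) ℝ}
    {B : Matrix (BIdx n) (BIdx m) ℝ} (hA : Inc (· ≤ ·) A) (hB : Inc (· ≤ ·) B)
    (hw : ∀ a : BIdx n, a.1 < i → w a = 0) (k : ℕ) :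
    (w ᵥ* (A ^ k * B)) ∘ BIdx.mk m i = (w ∘ BIdx.mk n i) ᵥ*
      (A.submatrix (BIdx.mk n i) (BIdx.mk n i) ^ k * B.submatrix (BIdx.mk n i) (BIdx.mk m i)) := by
  have hpow : (w ᵥ* A ^ k) ∘ BIdx.mk n i =
      (w ∘ BIdx.mk n i) ᵥ* A.submatrix (BIdx.mk n i) (BIdx.mk n i) ^ k := by
    induction k with
    | zero => simp
    | succ k ih =>
      rw [pow_succ, ← vecMul_vecMul, vecMul_comp_bIdx_mk hA
        (vecMul_pow_apply_eq_zero_of_lt hA hw k), ih, pow_succ, vecMul_vecMul]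
  rw [← vecMul_vecMul, vecMul_comp_bIdx_mk hB (vecMul_pow_apply_eq_zero_of_lt hA hw k), hpow,
    vecMul_vecMul]

end BlockTriangular

/-- If a poset-causal system is weakly locally controllable (every local pair `(A_ii, B_ii)`
is controllable), then the global system is controllable: `R(A,B) = X`. -/
theorem weaklyLocallyControllable_implies_controllable [PartialOrder P]
    (n m : P → ℕ)
    (A : Matrix (BIdx n) (BIdx n) ℝ) (B : Matrix (BIdx n) (BIdx m) ℝ)
    (hA : Inc (· ≤ ·) A) (hB : Inc (· ≤ ·) B)
    (hloc : ∀ i : P, reach (A.submatrix (fun a => (⟨i, a⟩ : BIdx n)) (fun a => (⟨i, a⟩ : BIdx n)))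
      (B.submatrix (fun a => (⟨i, a⟩ : BIdx n)) (fun a => (⟨i, a⟩ : BIdx m))) = ⊤) :
    reach A B = ⊤ := by
  refine (reach_eq_top_iff A B).mpr fun v hv => ?_
  by_contra hv0
  have hS : {j : P | v ∘ BIdx.mk n j ≠ 0}.Nonempty := by
    obtain ⟨a, ha⟩ := Function.ne_iff.mp hv0
    exact ⟨a.1, Function.ne_iff.mpr ⟨a.2, ha⟩⟩
  obtain ⟨i, hi, hmin⟩ := wellFounded_lt.has_min _ hS
  have hbelow : ∀ a : BIdx n, a.1 < i → v a = 0 := fun a ha =>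
    by_contra fun hva => hmin a.1 (Function.ne_iff.mpr ⟨a.2, hva⟩) ha
  refine hi ((reach_eq_top_iff _ _).mp (hloc i) _ fun k hk => ?_)
  have hk' : k < Fintype.card (BIdx n) :=
    hk.trans_le <| Fintype.card_le_of_injective _ (sigma_mk_injective (β := (Fin <| n ·)))
  rw [← vecMul_pow_mul_comp_bIdx_mk hA hB hbelow k, hv k hk', Pi.zero_comp]
end

section
/- For a poset-causal system, the unobservable subspace of the global pair (C,A) equals the intersection over i ∈ P of N_i ⊕ X_{P∖↑i}, where N_i is the i-upstream indistinguishable set: N(C,A) = ∩_{i∈P} (N_i ⊕ X_{P∖↑i}). -/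
open Matrix

attribute [local instance] Classical.propDecidable

variable {P : Type*} [Fintype P] [DecidableEq P]

section Aux
set_option linter.unusedSectionVars false

open Polynomial Finset

/-- Cayley–Hamilton consequence: if `(C * M^j) x = 0` for all `j < card ι`, then for all `j`. -/
theorem aux_CH {ι κ : Type*} [Fintype ι] [Fintype κ] [DecidableEq ι]
    (C : Matrix κ ι ℝ) (M : Matrix ι ι ℝ) (x : ι → ℝ)
    (h : ∀ j, j < Fintype.card ι → (C * M ^ j).mulVec x = 0) (k : ℕ) :
    (C * M ^ k).mulVec x = 0 := by
  set d := Fintype.card ι with hd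
  set q : ℝ[X] := X ^ k %ₘ M.charpoly with hq
  have hdeg : q.degree < M.charpoly.degree := degree_modByMonic_lt _ M.charpoly_monic
  have hnd : q = 0 ∨ q.natDegree < d := by
    rcases eq_or_ne q 0 with h0 | h0
    · exact Or.inl h0
    · right
      have := natDegree_lt_natDegree h0 hdeg
      rwa [M.charpoly_natDegree_eq_dim] at this
  have hMk : M ^ k = ∑ j ∈ Finset.range d, q.coeff j • M ^ j := by
    rcases hnd with h0 | h0
    · rw [M.pow_eq_aeval_mod_charpoly, ← hq, h0]
      simp
    · rw [M.pow_eq_aeval_mod_charpoly, ← hq, aeval_eq_sum_range' h0]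
  rw [hMk, Matrix.mul_sum]
  have : ∀ j ∈ Finset.range d, (C * q.coeff j • M ^ j).mulVec x = 0 := by
    intro j hj
    rw [Matrix.mul_smul, Matrix.smul_mulVec, h j (Finset.mem_range.mp hj), smul_zero]
  let f : Matrix κ ι ℝ →+ (κ → ℝ) :=
    { toFun := fun G => G.mulVec x
      map_add' := fun a b => Matrix.add_mulVec a b x
      map_zero' := Matrix.zero_mulVec x }
  calc f (∑ j ∈ Finset.range d, C * q.coeff j • M ^ j)
      = ∑ j ∈ Finset.range d, f (C * q.coeff j • M ^ j) := map_sum f _ _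
    _ = 0 := Finset.sum_eq_zero this

theorem aux_sum_subtype {α : Type*} [Fintype α] (p : α → Prop) (f : α → ℝ)
    (h : ∀ b, ¬ p b → f b = 0) : ∑ b : {b // p b}, f b.val = ∑ b, f b := by
  classical
  rw [← Finset.sum_subtype (Finset.univ.filter p)
        (fun x => by simp [Finset.mem_filter]) f]
  exact Finset.sum_filter_of_ne (fun b _ hb => by_contra fun hp => hb (h b hp))

theorem aux_mem_upSet [Preorder P] {i j : P} :
    j ∈ upSet (· ≤ ·) ({i} : Set P) ↔ i ≤ j := by
  simp [upSet]

theorem aux_bcmp_mul {n m l : P → ℕ} (G : Matrix (BIdx n) (BIdx m) ℝ)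
    (H : Matrix (BIdx m) (BIdx l) ℝ) (Q S T : Set P)
    (h : ∀ a b, a.1 ∈ Q → (b : BIdx m).1 ∉ S → G a b = 0) :
    bcmp (G * H) Q T = bcmp G Q S * bcmp H S T := by
  ext a c
  show (G * H) a.val c.val = _
  rw [Matrix.mul_apply, Matrix.mul_apply]
  exact (aux_sum_subtype (fun b : BIdx m => b.1 ∈ S)
    (fun b => G a.val b * H b c.val)
    (fun b hb => by show G a.val b * H b c.val = 0; rw [h a.val b a.2 hb, zero_mul])).symm

theorem aux_bcmp_one {n : P → ℕ} (S : Set P) :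
    bcmp (1 : Matrix (BIdx n) (BIdx n) ℝ) S S = 1 := by
  ext a b
  show (1 : Matrix (BIdx n) (BIdx n) ℝ) a.val b.val = (1 : Matrix _ _ ℝ) a b
  by_cases hab : a = b
  · subst hab; simp
  · rw [Matrix.one_apply_ne (fun hv => hab (Subtype.ext hv)), Matrix.one_apply_ne hab]

theorem aux_Inc_mul [Preorder P] {n m l : P → ℕ} {G : Matrix (BIdx n) (BIdx m) ℝ}
    {H : Matrix (BIdx m) (BIdx l) ℝ} (hG : Inc (· ≤ ·) G) (hH : Inc (· ≤ ·) H) :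
    Inc (· ≤ ·) (G * H) := by
  intro a b hab
  rw [Matrix.mul_apply]
  apply Finset.sum_eq_zero
  intro c _
  by_cases h1 : a.1 ≤ c.1
  · rw [hH c b (fun h2 => hab (h1.trans h2)), mul_zero]
  · rw [hG a c h1, zero_mul]

theorem aux_Inc_pow [Preorder P] {n : P → ℕ} {A : Matrix (BIdx n) (BIdx n) ℝ}
    (hA : Inc (· ≤ ·) A) (k : ℕ) : Inc (· ≤ ·) (A ^ k) := by
  induction k with
  | zero => intro a b hab
            rw [pow_zero, Matrix.one_apply_ne
              (fun h => hab (le_of_eq (congrArg Sigma.fst h)))]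
  | succ k ih => rw [pow_succ]; exact aux_Inc_mul ih hA

theorem aux_bcmp_pow [Preorder P] {n : P → ℕ} (A : Matrix (BIdx n) (BIdx n) ℝ)
    (hA : Inc (· ≤ ·) A) (S : Set P) (hS : ∀ a b : P, a ∈ S → a ≤ b → b ∈ S) (k : ℕ) :
    bcmp (A ^ k) S S = (bcmp A S S) ^ k := by
  induction k with
  | zero => simpa using aux_bcmp_one S
  | succ k ih =>
      rw [pow_succ, pow_succ, ← ih, ← aux_bcmp_mul (A ^ k) A S S S]
      intro a b ha hb
      exact aux_Inc_pow hA k a b (fun hle => hb (hS a.1 b.1 ha hle))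

theorem aux_mulVec_bcmp {n m : P → ℕ} (G : Matrix (BIdx m) (BIdx n) ℝ)
    (x : BIdx n → ℝ) (Q S : Set P) (a : BIdx m) (ha : a.1 ∈ Q)
    (h : ∀ b : BIdx n, b.1 ∉ S → G a b = 0) :
    (bcmp G Q S).mulVec (fun b => x b.val) ⟨a, ha⟩ = G.mulVec x a := by
  simp only [Matrix.mulVec, dotProduct]
  exact aux_sum_subtype (fun b : BIdx n => b.1 ∈ S) (fun b => G a b * x b)
    (fun b hb => by show G a b * x b = 0; rw [h b hb, zero_mul])

theorem aux_emb_mulVec {n : P → ℕ} (S : Set P) (w : {a : BIdx n // a.1 ∈ S} → ℝ)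
    (p : BIdx n) :
    (embMat n S).mulVec w p = if h : p.1 ∈ S then w ⟨p, h⟩ else 0 := by
  simp only [Matrix.mulVec, dotProduct]
  by_cases h : p.1 ∈ S
  · rw [dif_pos h]
    rw [Finset.sum_eq_single (⟨p, h⟩ : {a : BIdx n // a.1 ∈ S})]
    · simp [embMat]
    · intro q _ hq
      have : p ≠ q.val := fun hv => hq (Subtype.ext hv.symm)
      simp [embMat, this]
    · simp
  · rw [dif_neg h]
    apply Finset.sum_eq_zero
    intro q _
    have : p ≠ q.val := fun hv => h (hv ▸ q.2)
    simp [embMat, this]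

theorem aux_mem_coordSub {n : P → ℕ} (S : Set P) (z : BIdx n → ℝ) :
    z ∈ coordSub n S ↔ ∀ p : BIdx n, p.1 ∉ S → z p = 0 := by
  constructor
  · rintro ⟨w, rfl⟩ p hp
    show (projMat n S).mulVec w p = 0
    simp only [Matrix.mulVec, dotProduct]
    apply Finset.sum_eq_zero
    intro q _
    simp only [projMat, Matrix.of_apply]
    rw [if_neg (fun hc : p = q ∧ p.1 ∈ S => hp hc.2), zero_mul]
  · intro h
    refine ⟨z, funext fun p => ?_⟩
    show (projMat n S).mulVec z p = z p
    simp only [Matrix.mulVec, dotProduct]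
    rw [Finset.sum_eq_single p]
    · by_cases hp : p.1 ∈ S
      · simp [projMat, hp]
      · simp [projMat, hp, h p hp]
    · intro q _ hq
      simp [projMat, Ne.symm hq]
    · simp

theorem aux_mem_unobs {ι κ : Type*} [Fintype ι] [Fintype κ] [DecidableEq ι]
    (C : Matrix κ ι ℝ) (A : Matrix ι ι ℝ) (x : ι → ℝ) :
    x ∈ unobs C A ↔ ∀ k : ℕ, (C * A ^ k).mulVec x = 0 := by
  simp only [unobs, Submodule.mem_iInf, LinearMap.mem_ker, Matrix.mulVecLin_apply]
  constructor
  · intro h k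
    exact aux_CH C A x (fun j hj => h ⟨j, hj⟩) k
  · intro h k
    exact h k


end Aux

/-- For a poset-causal system, the unobservable subspace of the global pair `(C,A)` equals the
intersection over `i ∈ P` of `N_i ⊕ X_{P∖↑i}`, where `N_i` is the `i`-upstream
indistinguishable set: `N(C,A) = ∩_{i∈P} (N_i ⊕ X_{P∖↑i})`. -/
theorem unobs_eq_inf_upstream [PartialOrder P] (n r : P → ℕ)
    (C : Matrix (BIdx r) (BIdx n) ℝ) (A : Matrix (BIdx n) (BIdx n) ℝ)
    (hC : Inc (· ≤ ·) C) (hA : Inc (· ≤ ·) A) :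
    unobs C A = ⨅ i : P, (Ni (· ≤ ·) C A i ⊔ coordSub n ((upSet (· ≤ ·) {i})ᶜ)) := by
  have hSup : ∀ i : P, ∀ a b : P, a ∈ upSet (· ≤ ·) ({i} : Set P) → a ≤ b →
      b ∈ upSet (· ≤ ·) ({i} : Set P) := by
    intro i a b ha hab
    rw [aux_mem_upSet] at ha ⊢
    exact ha.trans hab
  ext x
  simp only [Submodule.mem_iInf]
  have hblock : ∀ (i : P) (k : ℕ) (a : BIdx r) (ha : a.1 ∈ ({i} : Set P)),
      ((bcmp C {i} (upSet (· ≤ ·) {i}) *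
          (bcmp A (upSet (· ≤ ·) {i}) (upSet (· ≤ ·) {i})) ^ k).mulVec
        (fun b => x b.val)) ⟨a, ha⟩ = (C * A ^ k).mulVec x a := by
    intro i k a ha
    have ha' : a.1 = i := ha
    rw [← aux_bcmp_pow A hA _ (hSup i) k,
        ← aux_bcmp_mul C (A ^ k) {i} (upSet (· ≤ ·) {i}) (upSet (· ≤ ·) {i})
          (fun a' b ha'' hb => hC a' b (fun hle => hb (aux_mem_upSet.mpr ((ha'' : a'.1 = i) ▸ hle))))]
    exact aux_mulVec_bcmp (C * A ^ k) x {i} _ a ha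
      (fun b hb => aux_Inc_mul hC (aux_Inc_pow hA k) a b
        (fun hle => hb (aux_mem_upSet.mpr (ha' ▸ hle))))
  constructor
  · intro hx i
    set S := upSet (· ≤ ·) ({i} : Set P) with hS
    set w : {a : BIdx n // a.1 ∈ S} → ℝ := fun b => x b.val with hwdef
    rw [aux_mem_unobs] at hx
    have hw : w ∈ unobs (bcmp C {i} S) (bcmp A S S) := by
      rw [aux_mem_unobs]
      intro k
      funext a
      obtain ⟨a, ha⟩ := a
      calc ((bcmp C {i} S * (bcmp A S S) ^ k).mulVec w) ⟨a, ha⟩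
          = (C * A ^ k).mulVec x a := hblock i k a ha
        _ = 0 := by rw [hx k]; rfl
    refine Submodule.mem_sup.mpr ⟨(embMat n S).mulVecLin w, Submodule.mem_map_of_mem hw,
      x - (embMat n S).mulVecLin w, ?_, by abel⟩
    rw [aux_mem_coordSub]
    intro p hp
    have hpS : p.1 ∈ S := not_not.mp hp
    show x p - (embMat n S).mulVec w p = 0
    rw [aux_emb_mulVec, dif_pos hpS]
    simp [hwdef]
  · intro hx
    rw [aux_mem_unobs]
    intro k
    funext a
    set S := upSet (· ≤ ·) ({a.1} : Set P) with hS
    obtain ⟨y, hy, z, hz, hsum⟩ := Submodule.mem_sup.mp (hx a.1)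
    obtain ⟨w, hw, rfl⟩ := hy
    have hrestr : (fun b : {b : BIdx n // b.1 ∈ S} => x b.val) = w := by
      funext b
      have hx_eq : x b.val = (embMat n S).mulVec w b.val + z b.val := by
        rw [← congrFun hsum b.val]; rfl
      have hz0 : z b.val = 0 := (aux_mem_coordSub _ z).mp hz b.val (not_not_intro b.2)
      rw [hx_eq, hz0, add_zero, aux_emb_mulVec, dif_pos b.2]
    replace hw := (aux_mem_unobs _ _ w).mp (SetLike.mem_coe.mp hw)
    have := hblock a.1 k a rfl
    rw [hrestr] at this
    show (C * A ^ k).mulVec x a = 0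
    rw [← this]
    have h0 : ((bcmp C {a.1} S * (bcmp A S S) ^ k).mulVec w) ⟨a, rfl⟩ = 0 := by
      rw [hw k]
      rfl
    exact h0
end

section
/- Let Σ_P ∼ (A,B,C,D) be a poset-causal system with dual system Σ_{P_d} ∼ (Aᵀ, Cᵀ, Bᵀ, Dᵀ) over the dual poset. Then for each i ∈ P, the i-downstream reachable set of the dual system is the orthogonal complement within X_{↑i} of the i-upstream indistinguishable set of the original system: X_{↑i} ⊖ (R_i)^d = N_i, and symmetrically X_{↓i} ⊖ (N_i)^d = R_i. -/
open Matrix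

attribute [local instance] Classical.propDecidable

variable {P : Type*} [Fintype P] [DecidableEq P]

lemma aux_range_transpose_orth {ι κ : Type*} [Fintype ι] [Fintype κ]
    [DecidableEq ι] [DecidableEq κ] (M : Matrix κ ι ℝ) :
    (LinearMap.range (Matrix.toEuclideanLin Mᵀ))ᗮ =
      LinearMap.ker (Matrix.toEuclideanLin M) := by
  have h : Matrix.toEuclideanLin Mᵀ = LinearMap.adjoint (Matrix.toEuclideanLin M) := by
    rw [← Matrix.toEuclideanLin_conjTranspose_eq_adjoint]
    rfl
  rw [h]
  ext x
  simp only [Submodule.mem_orthogonal, LinearMap.mem_ker, LinearMap.mem_range]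
  constructor
  · intro hx
    rw [← inner_self_eq_zero (𝕜 := ℝ)]
    have := hx (LinearMap.adjoint (Matrix.toEuclideanLin M) (Matrix.toEuclideanLin M x))
      ⟨_, rfl⟩
    rwa [LinearMap.adjoint_inner_left] at this
  · intro hx u hu
    obtain ⟨y, rfl⟩ := hu
    rw [LinearMap.adjoint_inner_left, hx, inner_zero_right]

lemma aux_reach_orth {ι κ : Type*} [Fintype ι] [Fintype κ]
    [DecidableEq ι] [DecidableEq κ] (A : Matrix ι ι ℝ) (C : Matrix κ ι ℝ) :
    (reachE Aᵀ Cᵀ)ᗮ = unobsE C A := by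
  unfold reachE unobsE
  rw [← Submodule.iInf_orthogonal]
  congr 1
  ext k
  rw [← Matrix.transpose_pow, ← Matrix.transpose_mul, aux_range_transpose_orth]

/-- Duality between downstream reachable and upstream indistinguishable sets: for a
poset-causal system `Σ_P ∼ (A,B,C,D)` with dual system `Σ_{P_d} ∼ (Aᵀ,Cᵀ,Bᵀ,Dᵀ)` over the
dual poset, for each `i ∈ P` the `i`-downstream reachable set of the dual system,
`(R_i)^d = R(Aᵀ(↑i,↑i), Cᵀ(↑i,i))`, is the orthogonal complement within `X_{↑i}` of the
`i`-upstream indistinguishable set `N_i` of the original system, and symmetrically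
`X_{↓i} ⊖ (N_i)^d = R_i` where `(N_i)^d = N(Bᵀ(i,↓i), Aᵀ(↓i,↓i))`. -/
theorem downstream_upstream_duality [PartialOrder P] (n m r : P → ℕ)
    (A : Matrix (BIdx n) (BIdx n) ℝ) (B : Matrix (BIdx n) (BIdx m) ℝ)
    (C : Matrix (BIdx r) (BIdx n) ℝ)
    (hA : Inc (· ≤ ·) A) (hB : Inc (· ≤ ·) B) (hC : Inc (· ≤ ·) C) :
    ∀ i : P,
      (reachE (bcmp A (upSet (· ≤ ·) {i}) (upSet (· ≤ ·) {i}))ᵀ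
          (bcmp C {i} (upSet (· ≤ ·) {i}))ᵀ)ᗮ =
        unobsE (bcmp C {i} (upSet (· ≤ ·) {i}))
          (bcmp A (upSet (· ≤ ·) {i}) (upSet (· ≤ ·) {i})) ∧
      (unobsE (bcmp B (downSet (· ≤ ·) {i}) {i})ᵀ
          (bcmp A (downSet (· ≤ ·) {i}) (downSet (· ≤ ·) {i}))ᵀ)ᗮ =
        reachE (bcmp A (downSet (· ≤ ·) {i}) (downSet (· ≤ ·) {i}))
          (bcmp B (downSet (· ≤ ·) {i}) {i}) := by
  intro i
  constructor
  · exact aux_reach_orth _ _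
  · have h := aux_reach_orth (bcmp A (downSet (· ≤ ·) {i}) (downSet (· ≤ ·) {i}))ᵀ
      (bcmp B (downSet (· ≤ ·) {i}) {i})ᵀ
    rw [Matrix.transpose_transpose, Matrix.transpose_transpose] at h
    rw [← h, Submodule.orthogonal_orthogonal]
end

section
/- Let Y_1 and Y_2 be subspaces of a finite-dimensional real inner product space Y, and let P_{Y_2} denote the orthogonal projection onto Y_2. Then P_{Y_2}(Y_1^⊥) = Y_2 ⊖ (Y_1 ∩ Y_2), i.e., the projection of the orthogonal complement of Y_1 onto Y_2 equals the orthogonal complement of Y_1 ∩ Y_2 within Y_2. -/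
/-!
An element of `Y₂` orthogonal to `Y₁ ∩ Y₂` lies, in finite dimension, in `Y₁ᗮ ⊔ Y₂ᗮ`; writing it
as `a + b` with `a ∈ Y₁ᗮ` and `b ∈ Y₂ᗮ`, it is the projection of `a`. Conversely, projections of
vectors of `Y₁ᗮ` are orthogonal to `Y₁ ∩ Y₂` because the projection onto `Y₂` is self-adjoint.
-/

namespace Submodule

variable {𝕜 E : Type*} [RCLike 𝕜] [NormedAddCommGroup E] [InnerProductSpace 𝕜 E]

theorem orthogonal_inf_eq_sup_orthogonal [FiniteDimensional 𝕜 E] (K₁ K₂ : Submodule 𝕜 E) :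
    (K₁ ⊓ K₂)ᗮ = K₁ᗮ ⊔ K₂ᗮ := by
  rw [← K₁.orthogonal_orthogonal, ← K₂.orthogonal_orthogonal, inf_orthogonal,
    orthogonal_orthogonal, orthogonal_orthogonal, orthogonal_orthogonal]

variable {K : Submodule 𝕜 E} [K.HasOrthogonalProjection]

theorem map_starProjection_orthogonal_le (L : Submodule 𝕜 E) :
    Lᗮ.map K.starProjection.toLinearMap ≤ K ⊓ (L ⊓ K)ᗮ := by
  rintro _ ⟨x, hx, rfl⟩
  refine ⟨starProjection_apply_mem K x, fun y ⟨hyL, hyK⟩ ↦ ?_⟩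
  rw [ContinuousLinearMap.coe_coe, ← inner_starProjection_left_eq_right,
    starProjection_eq_self_iff.mpr hyK]
  exact hx y hyL

theorem inf_sup_orthogonal_le_map_starProjection (W : Submodule 𝕜 E) :
    K ⊓ (W ⊔ Kᗮ) ≤ W.map K.starProjection.toLinearMap := by
  rintro _ ⟨hK, hsup⟩
  obtain ⟨w, hw, v, hv, rfl⟩ := mem_sup.mp hsup
  refine ⟨w, hw, ?_⟩
  rw [ContinuousLinearMap.coe_coe, ← add_zero (K.starProjection w),
    ← K.starProjection_apply_eq_zero_iff.mpr hv, ← map_add]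
  exact starProjection_eq_self_iff.mpr hK

end Submodule

/-- Let `Y₁` and `Y₂` be subspaces of a finite-dimensional real inner product space `Y`, and
let `P_{Y₂}` be the orthogonal projection onto `Y₂`. Then `P_{Y₂}(Y₁ᗮ) = Y₂ ⊖ (Y₁ ∩ Y₂)`,
where `Y₂ ⊖ U` denotes the orthogonal complement of `U` within `Y₂`, i.e. `Y₂ ⊓ Uᗮ`. -/
theorem proj_orthogonal_eq_relative_complement {Y : Type*} [NormedAddCommGroup Y]
    [InnerProductSpace ℝ Y] [FiniteDimensional ℝ Y] (Y₁ Y₂ : Submodule ℝ Y) :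
    Submodule.map (Y₂.subtype ∘ₗ (Submodule.orthogonalProjection Y₂).toLinearMap) Y₁ᗮ =
      Y₂ ⊓ (Y₁ ⊓ Y₂)ᗮ := by
  change Y₁ᗮ.map Y₂.starProjection.toLinearMap = _
  refine le_antisymm (Y₂.map_starProjection_orthogonal_le Y₁) ?_
  rw [Submodule.orthogonal_inf_eq_sup_orthogonal]
  exact Y₂.inf_sup_orthogonal_le_map_starProjection Y₁ᗮ
end
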